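/- arXiv:1502.07201 — 4 statements merged into one kernel-verified Lean document; each statement's English description precedes it below -/
import Mathlib

section
/- Let 𝔤 be a finite-dimensional real Lie algebra. If either 𝔤 or ℝ⊕𝔤 admits a symplectic structure, then for every j ≥ 0 one has dim C_j(𝔤) + dim Cʲ(𝔤) ≤ dim 𝔤, where C_j and Cʲ denote the terms of the upper and lower central series of 𝔤 respectively. -/
/-- A 2-form on a real Lie algebra is closed if it satisfies the cocycle condition. -/
def IsClosed2Form {L : Type*} [LieRing L] [LieAlgebra ℝ L]
    (ω : L →ₗ[ℝ] L →ₗ[ℝ] ℝ) : Prop :=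
  ∀ x y z : L, ω ⁅x, y⁆ z + ω ⁅y, z⁆ x + ω ⁅z, x⁆ y = 0

/-- A symplectic structure: a nondegenerate alternating closed bilinear form. -/
def IsSymplectic {L : Type*} [LieRing L] [LieAlgebra ℝ L]
    (ω : L →ₗ[ℝ] L →ₗ[ℝ] ℝ) : Prop :=
  (∀ x : L, ω x x = 0) ∧ (∀ x : L, (∀ y : L, ω x y = 0) → x = 0) ∧ IsClosed2Form ω

/-- The direct product of the one-dimensional abelian Lie algebra `ℝ` with `L`. -/
noncomputable instance RL.lieRing {L : Type*} [LieRing L] [LieAlgebra ℝ L] :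
    LieRing (ℝ × L) where
  bracket a b := (0, ⁅a.2, b.2⁆)
  add_lie x y z := by simp [Prod.ext_iff]
  lie_add x y z := by simp [Prod.ext_iff]
  lie_self x := by simp [Prod.ext_iff]
  leibniz_lie x y z := by simp [Prod.ext_iff]

noncomputable instance RL.lieAlgebra {L : Type*} [LieRing L] [LieAlgebra ℝ L] :
    LieAlgebra ℝ (ℝ × L) where
  lie_smul t x y := by simp [Bracket.bracket, Prod.ext_iff]

section Aux

variable {M : Type*} [LieRing M] [LieAlgebra ℝ M]

/-- `[Cⁱ, C_{i+k+1}] ⊆ C_k`. -/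
lemma lie_lcs_ucs_aux (i : ℕ) :
    ∀ k : ℕ, ∀ z ∈ LieModule.lowerCentralSeries ℝ M M i,
      ∀ w ∈ (⊥ : LieSubmodule ℝ M M).ucs (i + k + 1),
        ⁅z, w⁆ ∈ (⊥ : LieSubmodule ℝ M M).ucs k := by
  induction i with
  | zero =>
    intro k z _ w hw
    rw [show 0 + k + 1 = k + 1 by ring, LieSubmodule.ucs_succ,
      LieSubmodule.mem_normalizer] at hw
    exact hw z
  | succ i ih =>
    intro k z hz w hw
    rw [← LieSubmodule.mem_toSubmodule, LieModule.lowerCentralSeries_succ,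
      LieSubmodule.lieIdeal_oper_eq_linear_span'] at hz
    refine Submodule.span_induction ?_ ?_ ?_ ?_ hz
    · rintro m ⟨y, -, c, hc, rfl⟩
      rw [lie_lie]
      refine sub_mem ?_ ?_
      · have h1 : ⁅c, w⁆ ∈ (⊥ : LieSubmodule ℝ M M).ucs (k + 1) := by
          refine ih (k + 1) c hc w ?_
          rwa [show i + (k + 1) + 1 = i + 1 + k + 1 by ring]
        rw [LieSubmodule.ucs_succ, LieSubmodule.mem_normalizer] at h1
        exact h1 y
      · have h2 : ⁅y, w⁆ ∈ (⊥ : LieSubmodule ℝ M M).ucs (i + k + 1) := by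
          rw [show i + 1 + k + 1 = (i + k + 1) + 1 by ring, LieSubmodule.ucs_succ,
            LieSubmodule.mem_normalizer] at hw
          exact hw y
        exact ih k c hc _ h2
    · simp
    · intro a b _ _ ha hb
      rw [add_lie]; exact add_mem ha hb
    · intro t a _ ha
      rw [smul_lie]
      exact (LieSubmodule.mem_toSubmodule _).mp
        (Submodule.smul_mem _ t ((LieSubmodule.mem_toSubmodule _).mpr ha))

lemma skew_of_alt {ω : M →ₗ[ℝ] M →ₗ[ℝ] ℝ} (halt : ∀ x : M, ω x x = 0)
    (a b : M) : ω a b = -ω b a := by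
  have h := halt (a + b)
  simp only [map_add, LinearMap.add_apply, halt] at h
  linarith

/-- `ω(Cʲ, C_j) = 0` for a symplectic form. -/
lemma ortho_lcs_ucs {ω : M →ₗ[ℝ] M →ₗ[ℝ] ℝ} (hω : IsSymplectic ω) :
    ∀ j : ℕ, ∀ z ∈ LieModule.lowerCentralSeries ℝ M M j,
      ∀ w ∈ (⊥ : LieSubmodule ℝ M M).ucs j, ω z w = 0 := by
  obtain ⟨halt, -, hcl⟩ := hω
  intro j
  induction j with
  | zero =>
    intro z _ w hw
    rw [LieSubmodule.ucs_zero, LieSubmodule.mem_bot] at hw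
    simp [hw]
  | succ j ih =>
    intro z hz w hw
    rw [← LieSubmodule.mem_toSubmodule, LieModule.lowerCentralSeries_succ,
      LieSubmodule.lieIdeal_oper_eq_linear_span'] at hz
    refine Submodule.span_induction ?_ ?_ ?_ ?_ hz
    · rintro m ⟨y, -, c, hc, rfl⟩
      have hcoc := hcl y c w
      have h1 : ⁅c, w⁆ = 0 := by
        have := lie_lcs_ucs_aux j 0 c hc w (by rwa [show j + 0 + 1 = j + 1 by ring])
        rwa [LieSubmodule.ucs_zero, LieSubmodule.mem_bot] at this
      have h2 : ω ⁅w, y⁆ c = 0 := by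
        have hmem : ⁅w, y⁆ ∈ (⊥ : LieSubmodule ℝ M M).ucs j := by
          have : ⁅y, w⁆ ∈ (⊥ : LieSubmodule ℝ M M).ucs j := by
            rw [LieSubmodule.ucs_succ, LieSubmodule.mem_normalizer] at hw
            exact hw y
          rw [← lie_skew]
          exact neg_mem this
        have := ih c hc _ hmem
        rw [skew_of_alt halt]
        simp [this]
      rw [h1] at hcoc
      simp only [map_zero, LinearMap.zero_apply, add_zero] at hcoc
      rw [h2] at hcoc
      linarith
    · simp
    · intro a b _ _ ha hb
      simp only [map_add, LinearMap.add_apply, ha, hb, add_zero]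
    · intro t a _ ha
      simp only [map_smul, LinearMap.smul_apply, ha, smul_eq_mul, mul_zero]

/-- The key dimension estimate for a symplectic Lie algebra. -/
lemma key_dim [Module.Finite ℝ M] {ω : M →ₗ[ℝ] M →ₗ[ℝ] ℝ}
    (hω : IsSymplectic ω) (j : ℕ) :
    Module.finrank ℝ (((⊥ : LieSubmodule ℝ M M).ucs j : LieSubmodule ℝ M M) : Submodule ℝ M) +
      Module.finrank ℝ ((LieModule.lowerCentralSeries ℝ M M j : LieSubmodule ℝ M M) :
        Submodule ℝ M) ≤ Module.finrank ℝ M := by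
  obtain ⟨halt, hnd, hcl⟩ := hω
  have hrefl : LinearMap.IsRefl ω := by
    intro a b h
    rw [skew_of_alt halt, h, neg_zero]
  simp only [LieIdeal.toLieSubalgebra_toSubmodule]
  set C : Submodule ℝ M :=
    LieSubmodule.toSubmodule (LieModule.lowerCentralSeries ℝ M M j)
  set U : Submodule ℝ M :=
    LieSubmodule.toSubmodule ((⊥ : LieSubmodule ℝ M M).ucs j)
  have hle : U ≤ LinearMap.BilinForm.orthogonal ω C := by
    intro w hw
    rw [LinearMap.BilinForm.mem_orthogonal_iff]
    intro z hz
    exact ortho_lcs_ucs ⟨halt, hnd, hcl⟩ j z hz w hw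
  have h1 : Module.finrank ℝ U ≤ Module.finrank ℝ (LinearMap.BilinForm.orthogonal ω C) :=
    Submodule.finrank_mono hle
  have h2 : Module.finrank ℝ (LinearMap.BilinForm.orthogonal ω C) =
      Module.finrank ℝ M - Module.finrank ℝ C :=
    LinearMap.BilinForm.finrank_orthogonal (hrefl.nondegenerate_iff_separatingLeft.mpr hnd) C
  have h3 : Module.finrank ℝ C ≤ Module.finrank ℝ M := Submodule.finrank_le C
  change Module.finrank ℝ U + Module.finrank ℝ C ≤ Module.finrank ℝ M
  omega

end Aux

section Prod

variable {L : Type*} [LieRing L] [LieAlgebra ℝ L]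

lemma bracket_RL (a b : ℝ × L) : ⁅a, b⁆ = (0, ⁅a.2, b.2⁆) := rfl

/-- The lower central series of `ℝ × L` contains `0 × Cʲ(L)`. -/
lemma lcs_prod (j : ℕ) : ∀ z ∈ LieModule.lowerCentralSeries ℝ L L j,
    ((0 : ℝ), z) ∈ LieModule.lowerCentralSeries ℝ (ℝ × L) (ℝ × L) j := by
  induction j with
  | zero => intro z _; exact LieSubmodule.mem_top _
  | succ j ih =>
    intro z hz
    rw [← LieSubmodule.mem_toSubmodule, LieModule.lowerCentralSeries_succ,
      LieSubmodule.lieIdeal_oper_eq_linear_span'] at hz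
    refine Submodule.span_induction
      (p := fun m _ => ((0 : ℝ), m) ∈
        LieModule.lowerCentralSeries ℝ (ℝ × L) (ℝ × L) (j + 1)) ?_ ?_ ?_ ?_ hz
    · rintro m ⟨y, -, c, hc, rfl⟩
      show ((0 : ℝ), ⁅y, c⁆) ∈ LieModule.lowerCentralSeries ℝ (ℝ × L) (ℝ × L) (j + 1)
      have hb : ((0 : ℝ), ⁅y, c⁆) = ⁅((0 : ℝ), y), ((0 : ℝ), c)⁆ := rfl
      rw [LieModule.lowerCentralSeries_succ, hb]
      exact LieSubmodule.lie_mem_lie (LieSubmodule.mem_top _) (ih c hc)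
    · show ((0 : ℝ), (0 : L)) ∈ LieModule.lowerCentralSeries ℝ (ℝ × L) (ℝ × L) (j + 1)
      have hb : ((0 : ℝ), (0 : L)) = (0 : ℝ × L) := rfl
      rw [hb]; exact LieSubmodule.zero_mem _
    · intro a b _ _ ha hb
      show ((0 : ℝ), a + b) ∈ LieModule.lowerCentralSeries ℝ (ℝ × L) (ℝ × L) (j + 1)
      have hab : ((0 : ℝ), a + b) = ((0 : ℝ), a) + ((0 : ℝ), b) := by simp
      rw [hab]; exact add_mem ha hb
    · intro t a _ ha
      show ((0 : ℝ), t • a) ∈ LieModule.lowerCentralSeries ℝ (ℝ × L) (ℝ × L) (j + 1)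
      have hta : ((0 : ℝ), t • a) = t • ((0 : ℝ), a) := by simp
      rw [hta]
      exact (LieSubmodule.mem_toSubmodule _).mp
        (Submodule.smul_mem _ t ((LieSubmodule.mem_toSubmodule _).mpr ha))

/-- The upper central series of `ℝ × L` contains `0 × C_j(L)`. -/
lemma ucs_prod (j : ℕ) : ∀ w ∈ (⊥ : LieSubmodule ℝ L L).ucs j,
    ((0 : ℝ), w) ∈ (⊥ : LieSubmodule ℝ (ℝ × L) (ℝ × L)).ucs j := by
  induction j with
  | zero =>
    intro w hw
    rw [LieSubmodule.ucs_zero, LieSubmodule.mem_bot] at hw ⊢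
    simp [hw]
  | succ j ih =>
    intro w hw
    rw [LieSubmodule.ucs_succ, LieSubmodule.mem_normalizer] at hw ⊢
    intro x
    rw [bracket_RL]
    exact ih _ (hw x.2)

/-- `ℝ × 0` is contained in every positive term of the upper central series of `ℝ × L`. -/
lemma R_mem_ucs_prod (k : ℕ) (t : ℝ) :
    ((t : ℝ), (0 : L)) ∈ (⊥ : LieSubmodule ℝ (ℝ × L) (ℝ × L)).ucs (k + 1) := by
  induction k with
  | zero =>
    rw [LieSubmodule.ucs_succ, LieSubmodule.mem_normalizer]
    intro x
    rw [bracket_RL]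
    simp [LieSubmodule.mem_bot, Prod.ext_iff]
  | succ k ih =>
    rw [LieSubmodule.ucs_succ, LieSubmodule.mem_normalizer]
    intro x
    rw [bracket_RL]
    have h0 : (((0 : ℝ), ⁅x.2, (0 : L)⁆) : ℝ × L) = 0 := by simp
    rw [h0]
    exact LieSubmodule.zero_mem _

/-- A product submodule is linearly equivalent to the product of the submodules. -/
def subProdEquiv {R A B : Type*} [CommRing R] [AddCommGroup A] [AddCommGroup B]
    [Module R A] [Module R B] (p : Submodule R A) (q : Submodule R B) :
    (p.prod q) ≃ₗ[R] (↥p × ↥q) where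
  toFun x := (⟨x.1.1, x.2.1⟩, ⟨x.1.2, x.2.2⟩)
  invFun y := ⟨(y.1.1, y.2.1), ⟨y.1.2, y.2.2⟩⟩
  map_add' a b := rfl
  map_smul' t a := rfl
  left_inv a := rfl
  right_inv a := rfl

lemma finrank_subProd {R A B : Type*} [Field R] [AddCommGroup A] [AddCommGroup B]
    [Module R A] [Module R B] (p : Submodule R A) (q : Submodule R B)
    [Module.Finite R p] [Module.Finite R q] :
    Module.finrank R (p.prod q) = Module.finrank R p + Module.finrank R q := by
  rw [(subProdEquiv p q).finrank_eq, Module.finrank_prod]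

end Prod

/-- If a finite-dimensional real Lie algebra `L`, or `ℝ ⊕ L`, admits a symplectic structure,
then `dim C_j(L) + dim Cʲ(L) ≤ dim L` for all `j`, where `C_j` is the upper central series
and `Cʲ` the lower central series. -/
theorem dim_ucs_add_dim_lcs_le_of_symplectic
    (L : Type*) [LieRing L] [LieAlgebra ℝ L] [Module.Finite ℝ L]
    (h : (∃ ω : L →ₗ[ℝ] L →ₗ[ℝ] ℝ, IsSymplectic ω) ∨
         (∃ ω : (ℝ × L) →ₗ[ℝ] (ℝ × L) →ₗ[ℝ] ℝ, IsSymplectic ω)) :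
    ∀ j : ℕ,
      Module.finrank ℝ (((⊥ : LieSubmodule ℝ L L).ucs j : LieSubmodule ℝ L L) : Submodule ℝ L) +
        Module.finrank ℝ ((LieModule.lowerCentralSeries ℝ L L j : LieSubmodule ℝ L L) :
          Submodule ℝ L) ≤ Module.finrank ℝ L := by
  intro j
  rcases h with ⟨ω, hω⟩ | ⟨ω, hω⟩
  · exact key_dim hω j
  · -- the case of `ℝ × L`
    cases j with
    | zero =>
      simp only [LieSubmodule.ucs_zero, LieModule.lowerCentralSeries_zero,
        LieIdeal.toLieSubalgebra_toSubmodule, LieSubmodule.bot_toSubmodule,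
        LieSubmodule.top_toSubmodule, finrank_bot, finrank_top]
      change Module.finrank ℝ (⊥ : Submodule ℝ L) + Module.finrank ℝ (⊤ : Submodule ℝ L) ≤ _
      rw [finrank_bot, finrank_top]
      omega
    | succ k =>
      simp only [LieIdeal.toLieSubalgebra_toSubmodule]
      have hmain := key_dim hω (k + 1)
      simp only [LieIdeal.toLieSubalgebra_toSubmodule] at hmain
      have hU : (⊤ : Submodule ℝ ℝ).prod
            (LieSubmodule.toSubmodule ((⊥ : LieSubmodule ℝ L L).ucs (k + 1))) ≤
          LieSubmodule.toSubmodule ((⊥ : LieSubmodule ℝ (ℝ × L) (ℝ × L)).ucs (k + 1)) := by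
        rintro ⟨t, w⟩ ⟨-, hw⟩
        have h1 := R_mem_ucs_prod (L := L) k t
        have h2 := ucs_prod (L := L) (k + 1) w hw
        have he : ((t : ℝ), w) = ((t : ℝ), (0 : L)) + ((0 : ℝ), w) := by simp
        rw [he]
        exact add_mem h1 h2
      have hC : (⊥ : Submodule ℝ ℝ).prod
            (LieSubmodule.toSubmodule (LieModule.lowerCentralSeries ℝ L L (k + 1))) ≤
          LieSubmodule.toSubmodule
            (LieModule.lowerCentralSeries ℝ (ℝ × L) (ℝ × L) (k + 1)) := by
        rintro ⟨t, z⟩ ⟨ht, hz⟩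
        have ht' : t = 0 := by simpa using ht
        subst ht'
        exact lcs_prod (k + 1) z hz
      have hU' := Submodule.finrank_mono hU
      have hC' := Submodule.finrank_mono hC
      rw [finrank_subProd, finrank_top, Module.finrank_self] at hU'
      rw [finrank_subProd, finrank_bot] at hC'
      have hrank : Module.finrank ℝ (ℝ × L) = 1 + Module.finrank ℝ L := by
        rw [Module.finrank_prod, Module.finrank_self]
      change Module.finrank ℝ (LieSubmodule.toSubmodule ((⊥ : LieSubmodule ℝ (ℝ × L) (ℝ × L)).ucs (k + 1))) +
        Module.finrank ℝ (LieSubmodule.toSubmodule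
          (LieModule.lowerCentralSeries ℝ (ℝ × L) (ℝ × L) (k + 1))) ≤ _ at hmain
      change Module.finrank ℝ (LieSubmodule.toSubmodule ((⊥ : LieSubmodule ℝ L L).ucs (k + 1))) +
        Module.finrank ℝ (LieSubmodule.toSubmodule (LieModule.lowerCentralSeries ℝ L L (k + 1))) ≤ _
      omega
end

section
/- Let 𝔫 be a k-step nilpotent finite-dimensional real Lie algebra and let ω be a closed 2-form on 𝔫. If X ∈ Cⁱ(𝔫), Y ∈ Cʲ(𝔫) and i + j ≥ k, then ω(X,Y) = 0. -/
private lemma lcs_bracket_mem (L : Type*) [LieRing L] [LieAlgebra ℝ L] :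
    ∀ (j i : ℕ) (x y : L), x ∈ LieModule.lowerCentralSeries ℝ L L i →
      y ∈ LieModule.lowerCentralSeries ℝ L L j →
      ⁅x, y⁆ ∈ LieModule.lowerCentralSeries ℝ L L (i + j + 1) := by
  intro j
  induction j with
  | zero =>
      intro i x y hx _
      have : ⁅x, y⁆ = -⁅y, x⁆ := by rw [lie_skew]
      rw [this]
      refine neg_mem ?_
      have : ⁅y, x⁆ ∈ LieModule.lowerCentralSeries ℝ L L (i + 1) := by
        rw [LieModule.lowerCentralSeries_succ]
        exact LieSubmodule.lie_mem_lie (LieSubmodule.mem_top y) hx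
      simpa using this
  | succ j ih =>
      intro i x y hx hy
      rw [LieModule.lowerCentralSeries_succ] at hy
      have hy' : y ∈ Submodule.span ℝ {m : L | ∃ x ∈ (⊤ : LieIdeal ℝ L),
          ∃ n ∈ LieModule.lowerCentralSeries ℝ L L j, ⁅x, n⁆ = m} := by
        rw [← LieSubmodule.lieIdeal_oper_eq_linear_span']; exact hy
      refine Submodule.span_induction ?_ ?_ ?_ ?_ hy'
      · rintro m ⟨a, -, b, hb, rfl⟩
        have h1 : ⁅x, a⁆ ∈ LieModule.lowerCentralSeries ℝ L L (i + 1) := by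
          have : ⁅x, a⁆ = -⁅a, x⁆ := by rw [lie_skew]
          rw [this]
          refine neg_mem ?_
          rw [LieModule.lowerCentralSeries_succ]
          exact LieSubmodule.lie_mem_lie (LieSubmodule.mem_top a) hx
        have h2 : ⁅⁅x, a⁆, b⁆ ∈ LieModule.lowerCentralSeries ℝ L L ((i + 1) + j + 1) :=
          ih (i + 1) _ _ h1 hb
        have h3 : ⁅a, ⁅x, b⁆⁆ ∈ LieModule.lowerCentralSeries ℝ L L (i + j + 1 + 1) := by
          rw [LieModule.lowerCentralSeries_succ]
          exact LieSubmodule.lie_mem_lie (LieSubmodule.mem_top a) (ih i _ _ hx hb)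
        have heq : ((i + 1) + j + 1 : ℕ) = i + (j + 1) + 1 := by omega
        have heq2 : (i + j + 1 + 1 : ℕ) = i + (j + 1) + 1 := by omega
        rw [heq] at h2
        rw [heq2] at h3
        have : ⁅x, ⁅a, b⁆⁆ = ⁅⁅x, a⁆, b⁆ + ⁅a, ⁅x, b⁆⁆ := leibniz_lie x a b
        rw [this]
        exact add_mem h2 h3
      · simpa using (LieModule.lowerCentralSeries ℝ L L (i + (j + 1) + 1)).zero_mem
      · intro u v _ _ hu hv
        have : ⁅x, u + v⁆ = ⁅x, u⁆ + ⁅x, v⁆ := lie_add x u v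
        rw [this]; exact add_mem hu hv
      · intro c u _ hu
        have : ⁅x, c • u⁆ = c • ⁅x, u⁆ := lie_smul c x u
        rw [this]; exact Submodule.smul_mem _ c hu

/-- If `𝔫` is `k`-step nilpotent, `ω` is a closed 2-form, `X ∈ Cⁱ(𝔫)`, `Y ∈ Cʲ(𝔫)` and
`i + j ≥ k`, then `ω(X,Y) = 0`. -/
theorem closed_two_form_eq_zero_of_lcs
    (L : Type*) [LieRing L] [LieAlgebra ℝ L] [Module.Finite ℝ L]
    (k : ℕ) (hk1 : 1 ≤ k)
    (hstep : LieModule.lowerCentralSeries ℝ L L k = ⊥)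
    (hstep' : LieModule.lowerCentralSeries ℝ L L (k - 1) ≠ ⊥)
    (ω : L →ₗ[ℝ] L →ₗ[ℝ] ℝ) (halt : ∀ x : L, ω x x = 0)
    (hclosed : IsClosed2Form ω)
    (i j : ℕ) (hij : k ≤ i + j)
    (X Y : L) (hX : X ∈ LieModule.lowerCentralSeries ℝ L L i)
    (hY : Y ∈ LieModule.lowerCentralSeries ℝ L L j) :
    ω X Y = 0 := by
  have hbot : ∀ (n : ℕ), k ≤ n → ∀ z : L, z ∈ LieModule.lowerCentralSeries ℝ L L n → z = 0 := by
    intro n hn z hz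
    have : z ∈ LieModule.lowerCentralSeries ℝ L L k :=
      LieModule.antitone_lowerCentralSeries ℝ L L hn hz
    rw [hstep] at this
    simpa using this
  have hskew : ∀ x y : L, ω x y = -ω y x := by
    intro x y
    have h := halt (x + y)
    simp only [map_add, LinearMap.add_apply, halt] at h
    linarith
  clear hstep' hk1
  induction j generalizing i X Y with
  | zero =>
      have : X = 0 := hbot i (by omega) X hX
      rw [this]; simp
  | succ j ih =>
      rw [LieModule.lowerCentralSeries_succ] at hY
      have hY' : Y ∈ Submodule.span ℝ {m : L | ∃ x ∈ (⊤ : LieIdeal ℝ L),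
          ∃ n ∈ LieModule.lowerCentralSeries ℝ L L j, ⁅x, n⁆ = m} := by
        rw [← LieSubmodule.lieIdeal_oper_eq_linear_span']; exact hY
      refine Submodule.span_induction ?_ ?_ ?_ ?_ hY'
      · rintro m ⟨a, -, b, hb, rfl⟩
        have hc := hclosed a b X
        have h1 : ⁅b, X⁆ = 0 := by
          refine hbot (j + i + 1) (by omega) _ (lcs_bracket_mem L i j b X hb hX)
        have h2 : ω ⁅X, a⁆ b = 0 := by
          have hXa : ⁅X, a⁆ ∈ LieModule.lowerCentralSeries ℝ L L (i + 1) := by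
            have : ⁅X, a⁆ = -⁅a, X⁆ := by rw [lie_skew]
            rw [this]
            refine neg_mem ?_
            rw [LieModule.lowerCentralSeries_succ]
            exact LieSubmodule.lie_mem_lie (LieSubmodule.mem_top a) hX
          exact ih (i + 1) (by omega) ⁅X, a⁆ b hXa hb
        rw [h1] at hc
        simp only [map_zero, LinearMap.zero_apply, add_zero] at hc
        rw [h2, add_zero] at hc
        rw [hskew X ⁅a, b⁆, hc, neg_zero]
      · simp
      · intro u v _ _ hu hv
        simp only [map_add, hu, hv, add_zero]
      · intro c u _ hu
        simp only [map_smul, hu, smul_zero]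
end

section
/- Let 𝔫 be a k-step nilpotent finite-dimensional real Lie algebra and let m₁,…,m_k be subspaces of the dual space 𝔫* such that for each j = 1,…,k, m₁⊕…⊕m_j = {f ∈ 𝔫* : f vanishes on Cʲ(𝔫)}. Regard Λ²𝔫* as the space of alternating bilinear forms on 𝔫, so that Λ²𝔫* = ⊕_{1≤i≤j≤k} m_i∧m_j, where m_i∧m_j denotes the span of the alternating forms (X,Y) ↦ a(X)b(Y) − a(Y)b(X) with a ∈ m_i, b ∈ m_j. Then every closed 2-form on 𝔫 lies in ⊕_{1≤i≤j≤k, i+j≤k+1} m_i∧m_j, and every exact 2-form on 𝔫 lies in ⊕_{1≤i≤j≤k, i+j≤k} m_i∧m_j. -/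
set_option synthInstance.maxHeartbeats 1000000
set_option maxHeartbeats 1000000

/-- A 2-form is exact if `ω(X,Y) = -f [X,Y]` for some linear functional `f`. -/
def IsExact2Form {L : Type*} [LieRing L] [LieAlgebra ℝ L]
    (ω : L →ₗ[ℝ] L →ₗ[ℝ] ℝ) : Prop :=
  ∃ f : L →ₗ[ℝ] ℝ, ∀ x y : L, ω x y = -f ⁅x, y⁆

/-- `U ∧ V`: the span, inside the bilinear forms on `L`, of the alternating forms
`(X,Y) ↦ a(X)b(Y) − a(Y)b(X)` with `a ∈ U`, `b ∈ V`. -/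
noncomputable def wedgeSpan {L : Type*} [AddCommGroup L] [Module ℝ L]
    (U V : Submodule ℝ (Module.Dual ℝ L)) : Submodule ℝ (L →ₗ[ℝ] L →ₗ[ℝ] ℝ) :=
  Submodule.span ℝ {w | ∃ a ∈ U, ∃ b ∈ V, w = a.smulRight b - b.smulRight a}

section helpers
variable {L : Type*} [LieRing L] [LieAlgebra ℝ L]

lemma aux_lie_mem_lcs : ∀ (p q : ℕ) (x y : L),
    x ∈ LieModule.lowerCentralSeries ℝ L L p →
    y ∈ LieModule.lowerCentralSeries ℝ L L q →
    ⁅x, y⁆ ∈ LieModule.lowerCentralSeries ℝ L L (p + q + 1) := by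
  intro p
  induction p with
  | zero =>
    intro q x y _ hy
    rw [Nat.zero_add, LieModule.lowerCentralSeries_succ]
    exact LieSubmodule.lie_mem_lie (LieSubmodule.mem_top x) hy
  | succ p ih =>
    intro q x y hx hy
    rw [LieModule.lowerCentralSeries_succ, ← LieSubmodule.mem_toSubmodule,
      LieSubmodule.lieIdeal_oper_eq_linear_span'] at hx
    rw [show p + 1 + q + 1 = p + q + 2 by omega]
    refine Submodule.span_induction ?_ ?_ ?_ ?_ hx
    · rintro _ ⟨a, -, n, hn, rfl⟩
      have h1 : ⁅a, ⁅n, y⁆⁆ ∈ LieModule.lowerCentralSeries ℝ L L (p + q + 2) := by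
        rw [show p + q + 2 = (p + q + 1) + 1 by omega, LieModule.lowerCentralSeries_succ]
        exact LieSubmodule.lie_mem_lie (LieSubmodule.mem_top a) (ih q n y hn hy)
      have h2 : ⁅n, ⁅a, y⁆⁆ ∈ LieModule.lowerCentralSeries ℝ L L (p + q + 2) := by
        have hay : ⁅a, y⁆ ∈ LieModule.lowerCentralSeries ℝ L L (q + 1) := by
          rw [LieModule.lowerCentralSeries_succ]
          exact LieSubmodule.lie_mem_lie (LieSubmodule.mem_top a) hy
        have := ih (q + 1) n ⁅a, y⁆ hn hay
        rwa [show p + (q + 1) + 1 = p + q + 2 by omega] at this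
      rw [lie_lie]
      exact sub_mem h1 h2
    · simp
    · intro a b _ _ ha hb; rw [add_lie]; exact add_mem ha hb
    · intro t a _ ha; rw [smul_lie]
      exact Submodule.smul_mem
        ((LieModule.lowerCentralSeries ℝ L L (p + q + 2)) : Submodule ℝ L) t ha

lemma aux_skew (ω : L →ₗ[ℝ] L →ₗ[ℝ] ℝ) (halt : ∀ x : L, ω x x = 0) (x y : L) :
    ω x y = -ω y x := by
  have h := halt (x + y)
  simp only [map_add, LinearMap.add_apply, halt x, halt y] at h
  linarith

lemma aux_closed_vanish (ω : L →ₗ[ℝ] L →ₗ[ℝ] ℝ) (hω : IsClosed2Form ω)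
    (halt : ∀ x : L, ω x x = 0) :
    ∀ (p q : ℕ) (x y : L), x ∈ LieModule.lowerCentralSeries ℝ L L p →
      y ∈ LieModule.lowerCentralSeries ℝ L L q →
      LieModule.lowerCentralSeries ℝ L L (p + q) = ⊥ → ω x y = 0 := by
  intro p
  induction p with
  | zero =>
    intro q x y _ hy hbot
    rw [Nat.zero_add] at hbot
    rw [hbot, LieSubmodule.mem_bot] at hy
    rw [hy, map_zero]
  | succ p ih =>
    intro q x y hx hy hbot
    rw [show p + 1 + q = p + q + 1 by omega] at hbot
    rw [LieModule.lowerCentralSeries_succ, ← LieSubmodule.mem_toSubmodule,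
      LieSubmodule.lieIdeal_oper_eq_linear_span'] at hx
    refine Submodule.span_induction ?_ ?_ ?_ ?_ hx
    · rintro _ ⟨a, -, n, hn, rfl⟩
      have hc := hω a n y
      have h1 : ω ⁅n, y⁆ a = 0 := by
        have hb : ⁅n, y⁆ ∈ LieModule.lowerCentralSeries ℝ L L (p + q + 1) :=
          aux_lie_mem_lcs p q n y hn hy
        rw [hbot, LieSubmodule.mem_bot] at hb
        rw [hb, map_zero, LinearMap.zero_apply]
      have h2 : ω ⁅y, a⁆ n = 0 := by
        rw [aux_skew ω halt]
        have hya : ⁅y, a⁆ ∈ LieModule.lowerCentralSeries ℝ L L (q + 1) := by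
          have : ⁅a, y⁆ ∈ LieModule.lowerCentralSeries ℝ L L (q + 1) := by
            rw [LieModule.lowerCentralSeries_succ]
            exact LieSubmodule.lie_mem_lie (LieSubmodule.mem_top a) hy
          rw [← lie_skew] at this
          simpa using neg_mem this
        have := ih (q + 1) n ⁅y, a⁆ hn hya
          (by rwa [show p + (q + 1) = p + q + 1 by omega])
        rw [this, neg_zero]
      linarith
    · simp
    · intro a b _ _ ha hb
      rw [map_add, LinearMap.add_apply, ha, hb, add_zero]
    · intro t a _ ha
      rw [map_smul, LinearMap.smul_apply, ha, smul_zero]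

end helpers

/-- For a `k`-step nilpotent Lie algebra with subspaces `m₁, …, m_k` of the dual satisfying
`m₁ ⊕ ⋯ ⊕ m_j = (Cʲ𝔫)^⊥`, every closed (alternating) 2-form lies in
`⊕_{i≤j, i+j≤k+1} m_i ∧ m_j` and every exact 2-form lies in `⊕_{i≤j, i+j≤k} m_i ∧ m_j`. -/
theorem closed_and_exact_forms_mem_wedge_sup
    (L : Type*) [LieRing L] [LieAlgebra ℝ L] [Module.Finite ℝ L]
    (k : ℕ) (hk1 : 1 ≤ k)
    (hstep : LieModule.lowerCentralSeries ℝ L L k = ⊥)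
    (hstep' : LieModule.lowerCentralSeries ℝ L L (k - 1) ≠ ⊥)
    (m : ℕ → Submodule ℝ (Module.Dual ℝ L))
    (hindep : iSupIndep fun i : Finset.Icc 1 k => m i)
    (hm : ∀ j ∈ Finset.Icc 1 k,
      (⨆ i ∈ Finset.Icc 1 j, m i) =
        ((LieModule.lowerCentralSeries ℝ L L j : LieSubmodule ℝ L L) :
          Submodule ℝ L).dualAnnihilator)
    (ω : L →ₗ[ℝ] L →ₗ[ℝ] ℝ) (halt : ∀ x : L, ω x x = 0) :
    (IsClosed2Form ω →
      ω ∈ ⨆ i ∈ Finset.Icc 1 k, ⨆ j ∈ Finset.Icc i k, ⨆ (_ : i + j ≤ k + 1),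
        wedgeSpan (m i) (m j)) ∧
    (IsExact2Form ω →
      ω ∈ ⨆ i ∈ Finset.Icc 1 k, ⨆ j ∈ Finset.Icc i k, ⨆ (_ : i + j ≤ k),
        wedgeSpan (m i) (m j)) := by
  classical
  have hkk : k ∈ Finset.Icc 1 k := Finset.mem_Icc.mpr ⟨hk1, le_rfl⟩
  have htop : (⨆ i : ↥(Finset.Icc 1 k), m (i : ℕ)) = ⊤ := by
    rw [iSup_subtype]
    rw [hm k hkk, hstep]
    simp
  haveI hDfin : FiniteDimensional ℝ (Module.Dual ℝ L) := Module.dual_finite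
  letI iF : ∀ j : ℕ, Module.Free ℝ (m j) := fun j => Module.Free.of_divisionRing ℝ (m j)
  letI iD : ∀ j : ℕ, Module.Finite ℝ (m j) := fun j =>
    FiniteDimensional.finiteDimensional_submodule (m j)
  haveI : Module.Free ℝ L := Module.Free.of_divisionRing ℝ L
  haveI : Module.IsReflexive ℝ L := inferInstance
  have internal : DirectSum.IsInternal (fun i : ↥(Finset.Icc 1 k) => m (i : ℕ)) :=
    DirectSum.isInternal_submodule_of_iSupIndep_of_iSup_eq_top hindep htop
  have vmk : ∀ j : ℕ, Module.Basis (Fin (Module.finrank ℝ (m j))) ℝ (m j) :=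
    fun j => Module.finBasis ℝ (m j)
  let v : ∀ i : ↥(Finset.Icc 1 k), Module.Basis (Fin (Module.finrank ℝ (m (i : ℕ)))) ℝ (m (i : ℕ)) :=
    fun i => vmk (i : ℕ)
  let e : Module.Basis (Σ i : ↥(Finset.Icc 1 k), Fin (Module.finrank ℝ (m (i : ℕ)))) ℝ
      (Module.Dual ℝ L) := internal.collectedBasis v
  let X : Module.Basis (Σ i : ↥(Finset.Icc 1 k), Fin (Module.finrank ℝ (m (i : ℕ)))) ℝ L :=
    e.dualBasis.map (Module.evalEquiv ℝ L).symm
  have heX : ∀ α β, e β (X α) = if β = α then 1 else 0 := by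
    intro α β
    have hXa : X α = (Module.evalEquiv ℝ L).symm (e.dualBasis α) := Module.Basis.map_apply _ _ _
    rw [hXa, Module.apply_evalEquiv_symm_apply, Module.Basis.dualBasis_apply_self]
  have hmem_e : ∀ α, e α ∈ m (α.1 : ℕ) := fun α => internal.collectedBasis_mem v α
  have hXC : ∀ α, X α ∈
      ((LieModule.lowerCentralSeries ℝ L L ((α.1 : ℕ) - 1) : LieSubmodule ℝ L L) :
        Submodule ℝ L) := by
    intro α
    have hα : (α.1 : ℕ) ∈ Finset.Icc 1 k := α.1.2
    rw [Finset.mem_Icc] at hα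
    rcases Nat.eq_or_lt_of_le hα.1 with h1 | h2
    · have : (α.1 : ℕ) - 1 = 0 := by omega
      rw [this]
      simp [LieModule.lowerCentralSeries]
    · have hj : (α.1 : ℕ) - 1 ∈ Finset.Icc 1 k := Finset.mem_Icc.mpr ⟨by omega, by omega⟩
      rw [← Subspace.dualAnnihilator_dualCoannihilator_eq
        (W := ((LieModule.lowerCentralSeries ℝ L L ((α.1 : ℕ) - 1) : LieSubmodule ℝ L L) :
          Submodule ℝ L)), Submodule.mem_dualCoannihilator]
      intro f hf
      rw [← hm _ hj] at hf
      have hsuff : (⨆ l ∈ Finset.Icc 1 ((α.1 : ℕ) - 1), m l) ≤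
          LinearMap.ker (Module.Dual.eval ℝ L (X α)) := by
        refine iSup₂_le fun l hl => ?_
        rw [Finset.mem_Icc] at hl
        have hlk : l ∈ Finset.Icc 1 k := Finset.mem_Icc.mpr ⟨hl.1, by omega⟩
        have hml : m l = Submodule.span ℝ
            (Set.range fun a => ((v ⟨l, hlk⟩ a : Module.Dual ℝ L))) := by
          conv_lhs => rw [← Submodule.map_subtype_top (m l)]
          rw [← (v ⟨l, hlk⟩).span_eq, Submodule.map_span, ← Set.range_comp]
          rfl
        rw [hml, Submodule.span_le]
        rintro _ ⟨a, rfl⟩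
        have hco : ((v ⟨l, hlk⟩ a : Module.Dual ℝ L)) = e ⟨⟨l, hlk⟩, a⟩ :=
          (congrFun (internal.collectedBasis_coe v) ⟨⟨l, hlk⟩, a⟩).symm
        simp only [SetLike.mem_coe, LinearMap.mem_ker, Module.Dual.eval_apply]
        rw [hco, heX]
        rw [if_neg]
        intro hcon
        have : (⟨⟨l, hlk⟩, a⟩ : Σ i : ↥(Finset.Icc 1 k),
            Fin (Module.finrank ℝ (m (i : ℕ)))).1 = α.1 := by rw [hcon]
        have : l = (α.1 : ℕ) := congrArg (fun s : ↥(Finset.Icc 1 k) => (s : ℕ)) this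
        omega
      have := hsuff hf
      rw [LinearMap.mem_ker, Module.Dual.eval_apply] at this
      exact this
  have hexp : ω = ∑ α : (Σ i : ↥(Finset.Icc 1 k), Fin (Module.finrank ℝ (m (i : ℕ)))),
      ∑ β : (Σ i : ↥(Finset.Icc 1 k), Fin (Module.finrank ℝ (m (i : ℕ)))),
      ((2⁻¹ : ℝ) * ω (X α) (X β)) • ((e α).smulRight (e β) - (e β).smulRight (e α)) := by
    refine X.ext fun γ => ?_
    refine X.ext fun δ => ?_
    simp only [LinearMap.coe_sum, Finset.sum_apply, LinearMap.smul_apply,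
      LinearMap.sub_apply, LinearMap.smulRight_apply, heX, smul_eq_mul]
    simp only [mul_ite, ite_mul, one_mul, zero_mul, mul_one, mul_zero, mul_sub,
      Finset.sum_sub_distrib, Finset.sum_ite_eq, Finset.sum_ite_eq', Finset.mem_univ,
      if_true]
    have hcollapse : ∀ g : (Σ i : ↥(Finset.Icc 1 k), Fin (Module.finrank ℝ (m (i : ℕ)))) →
        (Σ i : ↥(Finset.Icc 1 k), Fin (Module.finrank ℝ (m (i : ℕ)))) → ℝ,
        (∑ x : (Σ i : ↥(Finset.Icc 1 k), Fin (Module.finrank ℝ (m (i : ℕ)))),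
          ∑ y : (Σ i : ↥(Finset.Icc 1 k), Fin (Module.finrank ℝ (m (i : ℕ)))),
            if x = δ then if y = γ then g x y else 0 else 0) = g δ γ := by
      intro g
      rw [Fintype.sum_eq_single δ (fun x hx => by simp [hx])]
      rw [Fintype.sum_eq_single γ (fun y hy => by simp [hy])]
      simp
    rw [hcollapse]
    have h := halt (X γ + X δ)
    simp only [map_add, LinearMap.add_apply, halt] at h
    linarith
  have key : ∀ c : ℕ,
      (∀ α β : (Σ i : ↥(Finset.Icc 1 k), Fin (Module.finrank ℝ (m (i : ℕ)))),
        ¬ ((α.1 : ℕ) + (β.1 : ℕ) ≤ c) → ω (X α) (X β) = 0) →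
      ω ∈ ⨆ i ∈ Finset.Icc 1 k, ⨆ j ∈ Finset.Icc i k, ⨆ (_ : i + j ≤ c),
        wedgeSpan (m i) (m j) := by
    intro c hc
    have le_target : ∀ i j : ℕ, i ∈ Finset.Icc 1 k → j ∈ Finset.Icc i k → i + j ≤ c →
        wedgeSpan (m i) (m j) ≤ ⨆ i ∈ Finset.Icc 1 k, ⨆ j ∈ Finset.Icc i k,
          ⨆ (_ : i + j ≤ c), wedgeSpan (m i) (m j) := fun i j hi hj hij =>
      le_iSup_of_le i (le_iSup_of_le hi (le_iSup_of_le j (le_iSup_of_le hj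
        (le_iSup_of_le hij le_rfl))))
    rw [hexp]
    refine Submodule.sum_mem _ fun α _ => Submodule.sum_mem _ fun β _ => ?_
    by_cases hzero : ω (X α) (X β) = 0
    · rw [hzero]
      simp
    · have hsum : (α.1 : ℕ) + (β.1 : ℕ) ≤ c := by
        by_contra h
        exact hzero (hc α β h)
      have hαk := Finset.mem_Icc.mp α.1.2
      have hβk := Finset.mem_Icc.mp β.1.2
      rcases le_total (α.1 : ℕ) (β.1 : ℕ) with hle | hle
      · refine Submodule.smul_mem _ _ (le_target (α.1 : ℕ) (β.1 : ℕ) α.1.2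
          (Finset.mem_Icc.mpr ⟨hle, hβk.2⟩) hsum ?_)
        exact Submodule.subset_span ⟨e α, hmem_e α, e β, hmem_e β, rfl⟩
      · refine Submodule.smul_mem _ _ (le_target (β.1 : ℕ) (α.1 : ℕ) β.1.2
          (Finset.mem_Icc.mpr ⟨hle, hαk.2⟩) (by omega) ?_)
        have hw : ((e β).smulRight (e α) - (e α).smulRight (e β) : L →ₗ[ℝ] L →ₗ[ℝ] ℝ) ∈
            wedgeSpan (m (β.1 : ℕ)) (m (α.1 : ℕ)) :=
          Submodule.subset_span ⟨e β, hmem_e β, e α, hmem_e α, rfl⟩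
        have := (wedgeSpan (m (β.1 : ℕ)) (m (α.1 : ℕ))).smul_mem (-1 : ℝ) hw
        convert this using 1
        ext x y
        simp
  have hbotn : ∀ n : ℕ, k ≤ n → LieModule.lowerCentralSeries ℝ L L n = ⊥ := by
    intro n hn
    exact le_bot_iff.mp (hstep ▸ LieModule.antitone_lowerCentralSeries ℝ L L hn)
  constructor
  · intro hclosed
    refine key (k + 1) fun α β hgt => ?_
    have hαk := Finset.mem_Icc.mp α.1.2
    have hβk := Finset.mem_Icc.mp β.1.2
    refine aux_closed_vanish ω hclosed halt ((α.1 : ℕ) - 1) ((β.1 : ℕ) - 1) (X α) (X β)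
      (hXC α) (hXC β) (hbotn _ (by omega))
  · rintro ⟨f, hf⟩
    refine key k fun α β hgt => ?_
    have hαk := Finset.mem_Icc.mp α.1.2
    have hβk := Finset.mem_Icc.mp β.1.2
    rw [hf]
    have hb : ⁅X α, X β⁆ ∈
        LieModule.lowerCentralSeries ℝ L L (((α.1 : ℕ) - 1) + ((β.1 : ℕ) - 1) + 1) :=
      aux_lie_mem_lcs _ _ _ _ (hXC α) (hXC β)
    rw [hbotn _ (by omega), LieSubmodule.mem_bot] at hb
    rw [hb, map_zero, neg_zero]
end

section
/- Let 𝔫 be a nonabelian finite-dimensional nilpotent real Lie algebra and let 𝔫 = 𝔫⁰ ⊋ 𝔫¹ ⊋ … ⊋ 𝔫^{k−1} ⊋ 𝔫^k = 0 be an accurate filtration of 𝔫 with 𝔫¹ = C¹(𝔫) = [𝔫,𝔫]. Let 𝔫̃ = ℝT ⊕ 𝔫 be the direct product of 𝔫 with a one-dimensional abelian Lie algebra ℝT. Then for every t with 1 ≤ t ≤ ⌈k/2⌉, the chain of subspaces 𝔫̃ʲ defined by 𝔫̃ʲ = ℝT ⊕ 𝔫ʲ for j = 1,…,t and 𝔫̃ʲ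 = 𝔫ʲ for j = t+1,…,k (with 𝔫̃⁰ = 𝔫̃, 𝔫̃^k = 0) is an accurate filtration of 𝔫̃ of the same length k. -/
/-- A filtration `𝔫 = 𝔫⁰ ⊋ 𝔫¹ ⊋ ⋯ ⊋ 𝔫ᵏ = 0` of a Lie algebra, with
`[𝔫ⁱ,𝔫ʲ] ⊆ 𝔫^{i+j+1}` (we set `𝔫ʲ = 0` for `j ≥ k`). -/
structure IsLieFiltration {L : Type*} [LieRing L] [LieAlgebra ℝ L]
    (n : ℕ → Submodule ℝ L) (k : ℕ) : Prop where
  top : n 0 = ⊤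
  strict : ∀ j < k, n (j + 1) < n j
  eq_bot : ∀ j, k ≤ j → n j = ⊥
  bracket_mem : ∀ i j : ℕ, ∀ x ∈ n i, ∀ y ∈ n j, ⁅x, y⁆ ∈ n (i + j + 1)

/-- A filtration of length `k` is accurate if `ω(X,Y) = 0` whenever `X ∈ 𝔫ⁱ`, `Y ∈ 𝔫ʲ`
and either `ω` is an exact 2-form and `i+j ≥ k−1`, or `ω` is a closed 2-form and `i+j ≥ k`. -/
def IsAccurate {L : Type*} [LieRing L] [LieAlgebra ℝ L]
    (n : ℕ → Submodule ℝ L) (k : ℕ) : Prop :=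
  (∀ ω : L →ₗ[ℝ] L →ₗ[ℝ] ℝ, (∀ x : L, ω x x = 0) → IsExact2Form ω →
    ∀ i j : ℕ, k - 1 ≤ i + j → ∀ x ∈ n i, ∀ y ∈ n j, ω x y = 0) ∧
  (∀ ω : L →ₗ[ℝ] L →ₗ[ℝ] ℝ, (∀ x : L, ω x x = 0) → IsClosed2Form ω →
    ∀ i j : ℕ, k ≤ i + j → ∀ x ∈ n i, ∀ y ∈ n j, ω x y = 0)

/-- If `𝔫` is a nonabelian finite-dimensional nilpotent real Lie algebra with an accurate
filtration `𝔫⁰ ⊋ ⋯ ⊋ 𝔫ᵏ = 0` such that `𝔫¹ = [𝔫,𝔫]`, then for every `1 ≤ t ≤ ⌈k/2⌉` the chain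
`𝔫̃ʲ = ℝT ⊕ 𝔫ʲ` (for `j ≤ t`) and `𝔫̃ʲ = 𝔫ʲ` (for `j > t`) is an accurate filtration of
`𝔫̃ = ℝT ⊕ 𝔫` of the same length `k`. -/
theorem isAccurate_extension
    (L : Type*) [LieRing L] [LieAlgebra ℝ L] [Module.Finite ℝ L]
    [LieRing.IsNilpotent L]
    (hnonab : ∃ x y : L, ⁅x, y⁆ ≠ 0)
    (k : ℕ) (n : ℕ → Submodule ℝ L)
    (hfil : IsLieFiltration n k) (hacc : IsAccurate n k)
    (hn1 : n 1 = ((LieModule.lowerCentralSeries ℝ L L 1 : LieSubmodule ℝ L L) : Submodule ℝ L))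
    (t : ℕ) (ht1 : 1 ≤ t) (ht2 : t ≤ (k + 1) / 2) :
    IsLieFiltration
      (fun j => if j ≤ t then ((⊤ : Submodule ℝ ℝ).prod (n j) : Submodule ℝ (ℝ × L))
        else ((⊥ : Submodule ℝ ℝ).prod (n j))) k ∧
    IsAccurate
      (fun j => if j ≤ t then ((⊤ : Submodule ℝ ℝ).prod (n j) : Submodule ℝ (ℝ × L))
        else ((⊥ : Submodule ℝ ℝ).prod (n j))) k := by
  classical
  have hbr : ∀ X Y : ℝ × L, ⁅X, Y⁆ = ((0 : ℝ), ⁅X.2, Y.2⁆) := fun X Y => rfl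
  -- k ≥ 2
  obtain ⟨x0, y0, hxy⟩ := hnonab
  have hx0 : x0 ∈ n 0 := hfil.top ▸ Submodule.mem_top
  have hy0 : y0 ∈ n 0 := hfil.top ▸ Submodule.mem_top
  have hbr1 : ⁅x0, y0⁆ ∈ n 1 := hfil.bracket_mem 0 0 x0 hx0 y0 hy0
  have hk2 : 2 ≤ k := by
    by_contra h
    push_neg at h
    have hb : n 1 = ⊥ := hfil.eq_bot 1 (by omega)
    rw [hb] at hbr1
    exact hxy (by simpa using hbr1)
  have htk : t < k := by omega
  -- monotonicity
  have hmono1 : ∀ m, n (m + 1) ≤ n m := by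
    intro m
    by_cases hm : m < k
    · exact (hfil.strict m hm).le
    · rw [hfil.eq_bot (m + 1) (by omega)]; exact bot_le
  have hmono : ∀ i j : ℕ, i ≤ j → n j ≤ n i := by
    intro i j h
    induction j with
    | zero => obtain rfl : i = 0 := Nat.le_zero.mp h; exact le_rfl
    | succ m ih =>
      rcases Nat.lt_or_ge i (m + 1) with h' | h'
      · exact le_trans (hmono1 m) (ih (by omega))
      · obtain rfl : i = m + 1 := by omega
        exact le_rfl
  have hmem2 : ∀ (j : ℕ) (X : ℝ × L),
      (X ∈ if j ≤ t then ((⊤ : Submodule ℝ ℝ).prod (n j)) else ((⊥ : Submodule ℝ ℝ).prod (n j)))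
      → X.2 ∈ n j := by
    intro j X hX
    by_cases h : j ≤ t
    · rw [if_pos h] at hX; exact hX.2
    · rw [if_neg h] at hX; exact hX.2
  have hmem1 : ∀ (j : ℕ) (X : ℝ × L), ¬ j ≤ t →
      (X ∈ if j ≤ t then ((⊤ : Submodule ℝ ℝ).prod (n j)) else ((⊥ : Submodule ℝ ℝ).prod (n j)))
      → X.1 = 0 := by
    intro j X h hX
    rw [if_neg h] at hX
    simpa using hX.1
  constructor
  · constructor
    · simp only [Nat.zero_le t, if_pos]
      ext ⟨a, x⟩
      simp [hfil.top]
    · intro j hj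
      by_cases h1 : j + 1 ≤ t
      · rw [if_pos h1, if_pos (by omega : j ≤ t)]
        obtain ⟨v, hvB, hvA⟩ := SetLike.exists_of_lt (hfil.strict j hj)
        rw [SetLike.lt_iff_le_and_exists]
        refine ⟨Submodule.prod_mono le_rfl (hfil.strict j hj).le, ⟨(0, v), ?_, ?_⟩⟩
        · exact ⟨Submodule.mem_top, hvB⟩
        · intro hc; exact hvA hc.2
      · by_cases h2 : j ≤ t
        · rw [if_neg h1, if_pos h2]
          rw [SetLike.lt_iff_le_and_exists]
          refine ⟨Submodule.prod_mono bot_le (hmono1 j), ⟨(1, 0), ?_, ?_⟩⟩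
          · exact ⟨Submodule.mem_top, (n j).zero_mem⟩
          · intro hc
            have : (1 : ℝ) = 0 := by simpa using hc.1
            norm_num at this
        · rw [if_neg h1, if_neg (by omega : ¬ j ≤ t)]
          obtain ⟨v, hvB, hvA⟩ := SetLike.exists_of_lt (hfil.strict j hj)
          rw [SetLike.lt_iff_le_and_exists]
          refine ⟨Submodule.prod_mono le_rfl (hfil.strict j hj).le, ⟨(0, v), ?_, ?_⟩⟩
          · exact ⟨Submodule.zero_mem ⊥, hvB⟩
          · intro hc; exact hvA hc.2
    · intro j hj
      rw [if_neg (by omega : ¬ j ≤ t)]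
      ext ⟨a, x⟩
      simp [hfil.eq_bot j hj]
    · intro i j X hX Y hY
      have h2 : ⁅X.2, Y.2⁆ ∈ n (i + j + 1) := hfil.bracket_mem i j X.2 (hmem2 i X hX) Y.2 (hmem2 j Y hY)
      rw [hbr]
      by_cases h : i + j + 1 ≤ t
      · rw [if_pos h]; exact ⟨Submodule.mem_top, h2⟩
      · rw [if_neg h]; exact ⟨Submodule.zero_mem ⊥, h2⟩
  · constructor
    · -- exact case
      intro ω halt ⟨f, hf⟩ i j hij X hX Y hY
      set ω' : L →ₗ[ℝ] L →ₗ[ℝ] ℝ :=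
        LinearMap.compl₁₂ ω (LinearMap.inr ℝ ℝ L) (LinearMap.inr ℝ ℝ L) with hω'
      have hω'app : ∀ x y : L, ω' x y = ω (0, x) (0, y) := fun x y => rfl
      have hexact' : IsExact2Form ω' := by
        refine ⟨f.comp (LinearMap.inr ℝ ℝ L), fun x y => ?_⟩
        rw [hω'app, hf]
        simp only [LinearMap.comp_apply, LinearMap.inr_apply]
        congr 1
      have halt' : ∀ x : L, ω' x x = 0 := fun x => by rw [hω'app]; exact halt _
      have key : ω X Y = ω' X.2 Y.2 := by
        rw [hω'app, hf, hf, hbr, hbr]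
      rw [key]
      exact hacc.1 ω' halt' hexact' i j hij X.2 (hmem2 i X hX) Y.2 (hmem2 j Y hY)
    · -- closed case
      intro ω halt hcl i j hij X hX Y hY
      set ω' : L →ₗ[ℝ] L →ₗ[ℝ] ℝ :=
        LinearMap.compl₁₂ ω (LinearMap.inr ℝ ℝ L) (LinearMap.inr ℝ ℝ L) with hω'
      have hω'app : ∀ x y : L, ω' x y = ω (0, x) (0, y) := fun x y => rfl
      have halt' : ∀ x : L, ω' x x = 0 := fun x => by rw [hω'app]; exact halt _
      have hcl' : IsClosed2Form ω' := by
        intro x y z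
        have h := hcl (0, x) (0, y) (0, z)
        simpa only [hbr, hω'app] using h
      have hskew : ∀ u v : ℝ × L, ω u v = -ω v u := by
        intro u v
        have h := halt (u + v)
        simp only [map_add, LinearMap.add_apply, halt u, halt v] at h
        linarith
      set φ : L →ₗ[ℝ] ℝ := (ω ((1 : ℝ), (0 : L))).comp (LinearMap.inr ℝ ℝ L) with hφ
      have hφapp : ∀ x : L, φ x = ω (1, 0) (0, x) := fun x => rfl
      have hφbr : ∀ x y : L, φ ⁅x, y⁆ = 0 := by
        intro x y
        have h := hcl (0, x) (0, y) ((1 : ℝ), (0 : L))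
        have e1 : ⁅((0 : ℝ), y), ((1 : ℝ), (0 : L))⁆ = 0 := by
          rw [hbr]; simp
        have e2 : ⁅((1 : ℝ), (0 : L)), ((0 : ℝ), x)⁆ = 0 := by
          rw [hbr]; simp
        rw [e1, e2, hbr] at h
        simp only [map_zero, LinearMap.zero_apply, add_zero] at h
        rw [hφapp, hskew]
        simpa using h
      have hφ1 : n 1 ≤ LinearMap.ker φ := by
        rw [hn1]
        show LieSubmodule.toSubmodule (LieModule.lowerCentralSeries ℝ L L 1) ≤ LinearMap.ker φ
        rw [LieModule.lowerCentralSeries_succ, LieSubmodule.lieIdeal_oper_eq_linear_span',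
          Submodule.span_le]
        rintro z ⟨x, -, y, -, rfl⟩
        exact hφbr x y
      have hφ0 : ∀ m : ℕ, 1 ≤ m → ∀ z ∈ n m, φ z = 0 := by
        intro m hm z hz
        exact hφ1 (hmono 1 m hm hz)
      have hdecomp : ∀ Z : ℝ × L, Z = Z.1 • ((1 : ℝ), (0 : L)) + ((0 : ℝ), Z.2) := by
        intro Z
        ext <;> simp
      have key : ω X Y = X.1 * φ Y.2 - Y.1 * φ X.2 + ω' X.2 Y.2 := by
        conv_lhs => rw [hdecomp X, hdecomp Y]
        simp only [map_add, map_smul, LinearMap.add_apply, LinearMap.smul_apply,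
          halt ((1 : ℝ), (0 : L)), hω'app, hφapp, smul_eq_mul, mul_zero]
        have : ω ((0 : ℝ), X.2) ((1 : ℝ), (0 : L)) = -ω ((1 : ℝ), (0 : L)) ((0 : ℝ), X.2) :=
          hskew _ _
        rw [this]
        ring
      have hω'0 : ω' X.2 Y.2 = 0 :=
        hacc.2 ω' halt' hcl' i j hij X.2 (hmem2 i X hX) Y.2 (hmem2 j Y hY)
      have h1 : X.1 * φ Y.2 = 0 := by
        by_cases h : i ≤ t
        · have : φ Y.2 = 0 := hφ0 j (by omega) Y.2 (hmem2 j Y hY)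
          rw [this, mul_zero]
        · rw [hmem1 i X h hX, zero_mul]
      have h2 : Y.1 * φ X.2 = 0 := by
        by_cases h : j ≤ t
        · have : φ X.2 = 0 := hφ0 i (by omega) X.2 (hmem2 i X hX)
          rw [this, mul_zero]
        · rw [hmem1 j Y h hY, zero_mul]
      rw [key, hω'0, h1, h2]
      ring
end
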